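/- If x and y are integers with x^2 − y^3 = 1, then (x, y) = (0, −1), (1, 0), (−1, 0), (3, 2), or (−3, 2). -/

import Mathlib

/-- Eisenstein integers `a + b ω` with `ω = (-1+√-3)/2`, `ω^2 = -1 - ω`. -/
@[ext] structure Zw where
  re : ℤ
  im : ℤ
deriving DecidableEq

namespace Zw

instance : Zero Zw := ⟨⟨0, 0⟩⟩
instance : One Zw := ⟨⟨1, 0⟩⟩
instance : Add Zw := ⟨fun x y => ⟨x.re + y.re, x.im + y.im⟩⟩
instance : Neg Zw := ⟨fun x => ⟨-x.re, -x.im⟩⟩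
instance : Mul Zw := ⟨fun x y => ⟨x.re * y.re - x.im * y.im,
  x.re * y.im + x.im * y.re - x.im * y.im⟩⟩

@[simp] lemma zero_re : (0 : Zw).re = 0 := rfl
@[simp] lemma zero_im : (0 : Zw).im = 0 := rfl
@[simp] lemma one_re : (1 : Zw).re = 1 := rfl
@[simp] lemma one_im : (1 : Zw).im = 0 := rfl
@[simp] lemma add_re (x y : Zw) : (x + y).re = x.re + y.re := rfl
@[simp] lemma add_im (x y : Zw) : (x + y).im = x.im + y.im := rfl
@[simp] lemma neg_re (x : Zw) : (-x).re = -x.re := rfl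
@[simp] lemma neg_im (x : Zw) : (-x).im = -x.im := rfl
@[simp] lemma mul_re (x y : Zw) : (x * y).re = x.re * y.re - x.im * y.im := rfl
@[simp] lemma mul_im (x y : Zw) : (x * y).im = x.re * y.im + x.im * y.re - x.im * y.im := rfl

instance commRing : CommRing Zw where
  add_assoc a b c := by ext <;> simp <;> ring
  zero_add a := by ext <;> simp
  add_zero a := by ext <;> simp
  add_comm a b := by ext <;> simp <;> ring
  left_distrib a b c := by ext <;> simp <;> ring
  right_distrib a b c := by ext <;> simp <;> ring
  zero_mul a := by ext <;> simp
  mul_zero a := by ext <;> simp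
  mul_assoc a b c := by ext <;> simp <;> ring
  one_mul a := by ext <;> simp
  mul_one a := by ext <;> simp
  mul_comm a b := by ext <;> simp <;> ring
  neg_add_cancel a := by ext <;> simp
  nsmul := fun n x => ⟨n * x.re, n * x.im⟩
  nsmul_zero := by intro x; ext <;> simp [HSMul.hSMul, SMul.smul]
  nsmul_succ := by intro n x; ext <;> simp [HSMul.hSMul, SMul.smul] <;> push_cast <;> ring
  zsmul := fun n x => ⟨n * x.re, n * x.im⟩
  zsmul_zero' := by intro x; ext <;> simp [HSMul.hSMul, SMul.smul]
  zsmul_succ' := by intro n x; ext <;> simp [HSMul.hSMul, SMul.smul] <;> push_cast <;> ring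
  zsmul_neg' := by intro n x; ext <;> simp [Int.negSucc_eq, HSMul.hSMul, SMul.smul] <;> push_cast <;> ring
  natCast := fun n => ⟨n, 0⟩
  natCast_zero := by ext <;> simp
  natCast_succ := by intro n; ext <;> simp
  intCast := fun n => ⟨n, 0⟩
  intCast_ofNat := fun n => rfl
  intCast_negSucc := by
    intro n
    apply Zw.ext
    · show Int.negSucc n = -((n + 1 : ℕ) : ℤ); simp [Int.negSucc_eq]
    · show (0 : ℤ) = -0; simp

@[simp] lemma intCast_re (n : ℤ) : (n : Zw).re = n := rfl
@[simp] lemma intCast_im (n : ℤ) : (n : Zw).im = 0 := rfl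
@[simp] lemma sub_re (x y : Zw) : (x - y).re = x.re - y.re := by
  rw [sub_eq_add_neg]; simp [sub_eq_add_neg]
@[simp] lemma sub_im (x y : Zw) : (x - y).im = x.im - y.im := by
  rw [sub_eq_add_neg]; simp [sub_eq_add_neg]

/-- The norm. -/
def norm (x : Zw) : ℤ := x.re ^ 2 - x.re * x.im + x.im ^ 2

/-- Conjugation. -/
def conj (x : Zw) : Zw := ⟨x.re - x.im, -x.im⟩

@[simp] lemma conj_re (x : Zw) : (conj x).re = x.re - x.im := rfl
@[simp] lemma conj_im (x : Zw) : (conj x).im = -x.im := rfl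

lemma norm_mul (x y : Zw) : norm (x * y) = norm x * norm y := by
  simp [norm]; ring

lemma norm_nonneg (x : Zw) : 0 ≤ norm x := by
  have : 4 * norm x = (2 * x.re - x.im) ^ 2 + 3 * x.im ^ 2 := by simp [norm]; ring
  nlinarith [sq_nonneg (2 * x.re - x.im), sq_nonneg x.im]

lemma norm_eq_zero_iff {x : Zw} : norm x = 0 ↔ x = 0 := by
  constructor
  · intro h
    have h4 : (2 * x.re - x.im) ^ 2 + 3 * x.im ^ 2 = 0 := by simp [norm] at h; nlinarith
    have h1 : x.im = 0 := by nlinarith [sq_nonneg (2 * x.re - x.im), sq_nonneg x.im]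
    have h2 : x.re = 0 := by simp [norm, h1] at h; nlinarith [sq_nonneg x.re]
    ext <;> simp [h1, h2]
  · rintro rfl; simp [norm]

lemma mul_conj (x : Zw) : x * conj x = (norm x : Zw) := by
  ext <;> simp only [mul_re, mul_im, conj_re, conj_im, intCast_re, intCast_im, norm] <;> ring

lemma norm_zero : norm (0 : Zw) = 0 := by simp [norm]

instance : NoZeroDivisors Zw := by
  constructor
  intro a b h
  have h2 : norm a * norm b = 0 := by rw [← norm_mul, h, norm_zero]
  rcases mul_eq_zero.1 h2 with h1 | h1
  · left; exact norm_eq_zero_iff.1 h1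
  · right; exact norm_eq_zero_iff.1 h1

instance : Nontrivial Zw := ⟨⟨0, 1, fun h => by simpa using congrArg Zw.re h⟩⟩

instance : IsDomain Zw := NoZeroDivisors.to_isDomain _


/-- Nearest-integer division helper: round `a / n` to nearest. -/
def rdiv (a n : ℤ) : ℤ := (2 * a + n).fdiv (2 * n)

lemma rdiv_le {a n : ℤ} (hn : 0 < n) : 2 * |a - rdiv a n * n| ≤ n := by
  have h2n : 0 < 2 * n := by omega
  have hlt : (2 * a + n) - (2 * a + n).fdiv (2 * n) * (2 * n) = (2 * a + n).fmod (2 * n) := by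
    rw [Int.fmod_def]; ring
  have hnn : 0 ≤ (2 * a + n).fmod (2 * n) := Int.fmod_nonneg_of_pos _ (by omega)
  have hub : (2 * a + n).fmod (2 * n) < 2 * n := Int.fmod_lt_of_pos _ h2n
  have hq : (2 * a + n).fdiv (2 * n) * (2 * n) = 2 * ((2 * a + n).fdiv (2 * n) * n) := by ring
  unfold rdiv
  rcases abs_cases (a - (2 * a + n).fdiv (2 * n) * n) with ⟨he, _⟩ | ⟨he, _⟩ <;> omega

/-- Division with remainder of norm at most `3/4` of the divisor's norm. -/
def zdiv (x y : Zw) : Zw :=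
  ⟨rdiv (x * conj y).re (norm y), rdiv (x * conj y).im (norm y)⟩

def zmod (x y : Zw) : Zw := x - y * zdiv x y

lemma zdiv_zero (x : Zw) : zdiv x 0 = 0 := by
  ext <;> simp [zdiv, rdiv, norm, Int.fdiv_zero]

lemma zmod_norm_lt (x : Zw) {y : Zw} (hy : y ≠ 0) : norm (zmod x y) < norm y := by
  have hn : 0 < norm y := by
    rcases lt_or_eq_of_le (norm_nonneg y) with h | h
    · exact h
    · exact absurd (norm_eq_zero_iff.1 h.symm) hy
  set n := norm y with hnn
  set p := x * conj y with hp
  have h1 : 2 * |p.re - rdiv p.re n * n| ≤ n := rdiv_le hn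
  have h2 : 2 * |p.im - rdiv p.im n * n| ≤ n := rdiv_le hn
  -- γ = conj y * (x - y * zdiv x y) = p - (zdiv x y) * n
  have hγ : conj y * zmod x y = p - zdiv x y * (n : Zw) := by
    unfold zmod
    rw [hp, hnn, ← mul_conj y]; ring
  have hγre : (conj y * zmod x y).re = p.re - rdiv p.re n * n := by
    rw [hγ]
    simp only [sub_re, mul_re, mul_im, intCast_re, intCast_im, mul_zero, sub_zero]
    rfl
  have hγim : (conj y * zmod x y).im = p.im - rdiv p.im n * n := by
    rw [hγ]
    simp only [sub_im, mul_re, mul_im, intCast_re, intCast_im, mul_zero, zero_mul, sub_zero,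
      add_zero, zero_add]
    rfl
  have hnormγ : norm (conj y) * norm (zmod x y) = norm (conj y * zmod x y) :=
    (norm_mul _ _).symm
  have hconjn : norm (conj y) = n := by simp [norm, hnn]; ring
  set u := p.re - rdiv p.re n * n with hu
  set v := p.im - rdiv p.im n * n with hv
  have hval : n * norm (zmod x y) = u ^ 2 - u * v + v ^ 2 := by
    rw [← hconjn, hnormγ]
    simp [norm, hγre, hγim]
  have habs : 4 * (u ^ 2 - u * v + v ^ 2) ≤ 3 * n ^ 2 := by
    have hu2 : (2 * u) ^ 2 ≤ n ^ 2 := by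
      have := abs_nonneg (u); nlinarith [abs_le.1 (le_refl |u|), sq_abs u, h1, abs_nonneg u]
    have hv2 : (2 * v) ^ 2 ≤ n ^ 2 := by
      nlinarith [sq_abs v, h2, abs_nonneg v]
    nlinarith [sq_nonneg (u + v)]
  nlinarith [hval, hn]

instance : EuclideanDomain Zw where
  quotient := zdiv
  remainder := zmod
  quotient_zero := zdiv_zero
  quotient_mul_add_remainder_eq := fun a b => by unfold zmod; ring
  r a b := (norm a).natAbs < (norm b).natAbs
  r_wellFounded := InvImage.wf (fun x => (norm x).natAbs) (Nat.lt_wfRel.wf)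
  remainder_lt := fun a b hb => by
    have h := zmod_norm_lt a hb
    have h1 := norm_nonneg (zmod a b)
    have h2 := norm_nonneg b
    omega
  mul_left_not_lt := fun a b hb => by
    have h1 : 1 ≤ norm b := by
      rcases lt_or_eq_of_le (norm_nonneg b) with h | h
      · omega
      · exact absurd (norm_eq_zero_iff.1 h.symm) hb
    have h2 : norm (a * b) = norm a * norm b := norm_mul a b
    have h3 := norm_nonneg a
    have h4 := norm_nonneg (a * b)
    intro hlt
    have : norm a * norm b < norm a := by omega
    nlinarith

lemma norm_dvd {x y : Zw} (h : x ∣ y) : norm x ∣ norm y := by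
  obtain ⟨c, rfl⟩ := h; rw [norm_mul]; exact dvd_mul_right _ _

lemma isUnit_of_norm_eq_one {x : Zw} (h : norm x = 1) : IsUnit x :=
  IsUnit.of_mul_eq_one (conj x) (by rw [mul_conj, h]; rfl)

lemma norm_eq_one_of_isUnit {x : Zw} (h : IsUnit x) : norm x = 1 := by
  obtain ⟨u, rfl⟩ := h
  have h1 : (u : Zw) * ↑u⁻¹ = 1 := u.mul_inv
  have h2 : norm u * norm ↑u⁻¹ = 1 := by
    rw [← norm_mul, h1]; simp [norm]
  have h3 := norm_nonneg (u : Zw)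
  exact Int.eq_one_of_mul_eq_one_right h3 h2

lemma norm_pos {x : Zw} (h : x ≠ 0) : 1 ≤ norm x := by
  rcases lt_or_eq_of_le (norm_nonneg x) with h1 | h1
  · omega
  · exact absurd (norm_eq_zero_iff.1 h1.symm) h

/-- Classification of the six units. -/
lemma units_cases {x : Zw} (h : norm x = 1) :
    x = ⟨1, 0⟩ ∨ x = ⟨-1, 0⟩ ∨ x = ⟨0, 1⟩ ∨ x = ⟨0, -1⟩ ∨ x = ⟨1, 1⟩ ∨ x = ⟨-1, -1⟩ := by
  obtain ⟨a, b⟩ := x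
  simp only [norm] at h
  have h4 : (2 * a - b) ^ 2 + 3 * b ^ 2 = 4 := by nlinarith
  have hb1 : b ≤ 1 := by nlinarith [sq_nonneg (2 * a - b), sq_nonneg (b - 1)]
  have hb2 : -1 ≤ b := by nlinarith [sq_nonneg (2 * a - b), sq_nonneg (b + 1)]
  have hc1 : 2 * a - b ≤ 2 := by nlinarith [sq_nonneg b, sq_nonneg (2 * a - b - 2)]
  have hc2 : -2 ≤ 2 * a - b := by nlinarith [sq_nonneg b, sq_nonneg (2 * a - b + 2)]
  have ha1 : a ≤ 1 := by omega
  have ha2 : -1 ≤ a := by omega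
  interval_cases a <;> interval_cases b <;> simp_all

lemma cube_coords (x : Zw) :
    x ^ 3 = ⟨x.re ^ 3 + x.im ^ 3 - 3 * x.re * x.im ^ 2,
            3 * x.re ^ 2 * x.im - 3 * x.re * x.im ^ 2⟩ := by
  ext <;> simp [pow_succ] <;> ring

end Zw

namespace Euler

open Zw

lemma int_even_iff (n : ℤ) : Even n ↔ (n : ZMod 2) = 0 := by
  rw [ZMod.intCast_zmod_eq_zero_iff_dvd]
  constructor
  · rintro ⟨k, rfl⟩; exact ⟨k, by ring⟩
  · rintro ⟨k, rfl⟩; exact ⟨k, by ring⟩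

lemma int_odd_iff (n : ℤ) : Odd n ↔ (n : ZMod 2) = 1 := by
  rw [← Int.not_even_iff_odd, int_even_iff]
  generalize (n : ZMod 2) = x
  revert x; decide

/-- `3 g² t - 3 g t²` is always even. -/
lemma even_B (g t : ℤ) : Even (3 * g ^ 2 * t - 3 * g * t ^ 2) := by
  rw [int_even_iff]
  push_cast
  have : ∀ x y : ZMod 2, 3 * x ^ 2 * y - 3 * x * y ^ 2 = 0 := by decide
  exact this _ _

lemma even_A {g t : ℤ} (h : Even (g ^ 3 + t ^ 3 - 3 * g * t ^ 2)) :
    Even g ∧ Even t := by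
  rw [int_even_iff] at h
  push_cast at h
  have key : ∀ x y : ZMod 2, x ^ 3 + y ^ 3 - 3 * x * y ^ 2 = 0 → x = 0 ∧ y = 0 := by decide
  obtain ⟨h1, h2⟩ := key _ _ h
  exact ⟨(int_even_iff g).2 h1, (int_even_iff t).2 h2⟩

lemma final_step {a b G0 H0 : ℤ}
    (h1 : a + b = G0 ^ 3 + H0 ^ 3 - 3 * G0 * H0 ^ 2)
    (h2 : 2 * b = 3 * G0 ^ 2 * H0 - 3 * G0 * H0 ^ 2) :
    ∃ e f : ℤ, a = e ^ 3 - 9 * e * f ^ 2 ∧ b = 3 * e ^ 2 * f - 3 * f ^ 3 := by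
  obtain ⟨G, H, hH, k1, k2⟩ :
      ∃ G H : ℤ, Even H ∧ a + b = G ^ 3 + H ^ 3 - 3 * G * H ^ 2 ∧
        2 * b = 3 * G ^ 2 * H - 3 * G * H ^ 2 := by
    rcases Int.even_or_odd H0 with hH | hH
    · exact ⟨G0, H0, hH, h1, h2⟩
    · rcases Int.even_or_odd G0 with hG | hG
      · exact ⟨H0 - G0, -G0, hG.neg, by linear_combination h1, by linear_combination h2⟩
      · exact ⟨-H0, G0 - H0, hG.sub_odd hH, by linear_combination h1, by linear_combination h2⟩
  obtain ⟨f, hf⟩ := hH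
  subst hf
  have hb2 : 2 * b = 2 * (3 * G ^ 2 * f - 6 * G * f ^ 2) := by linear_combination k2
  have hb : b = 3 * G ^ 2 * f - 6 * G * f ^ 2 := by linarith
  exact ⟨G - f, f, by linear_combination k1 - hb, by linear_combination hb⟩

/-- Euler's key lemma: if `a² + 3b²` is a cube with `a, b` coprime, then it comes
from the cube of `e + f√-3`. -/
lemma cube_rep {a b s : ℤ} (hco : IsCoprime a b) (h : a ^ 2 + 3 * b ^ 2 = s ^ 3) :
    ∃ e f : ℤ, a = e ^ 3 - 9 * e * f ^ 2 ∧ b = 3 * e ^ 2 * f - 3 * f ^ 3 := by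
  -- not both even
  have hno2 : ¬ (Even a ∧ Even b) := by
    rintro ⟨⟨k, rfl⟩, ⟨l, rfl⟩⟩
    have hd1 : (2 : ℤ) ∣ k + k := ⟨k, by ring⟩
    have hd2 : (2 : ℤ) ∣ l + l := ⟨l, by ring⟩
    have := hco.isUnit_of_dvd' hd1 hd2
    rw [Int.isUnit_iff] at this
    omega
  -- not both odd
  have hnboth : ¬ (Odd a ∧ Odd b) := by
    rintro ⟨⟨k, rfl⟩, ⟨l, rfl⟩⟩
    have key : ∀ x y z : ZMod 8, (2 * x + 1) ^ 2 + 3 * (2 * y + 1) ^ 2 ≠ z ^ 3 := by decide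
    have hc := congrArg (fun t : ℤ => (t : ZMod 8)) h
    push_cast at hc
    exact key _ _ _ hc
  -- s is odd
  have hsodd : Odd s := by
    have hps : Odd (a ^ 2 + 3 * b ^ 2) := by
      rcases Int.even_or_odd a with ha | ha <;> rcases Int.even_or_odd b with hb | hb
      · exact absurd ⟨ha, hb⟩ hno2
      · rw [int_odd_iff]; push_cast
        rw [(int_even_iff a).1 ha, (int_odd_iff b).1 hb]; decide
      · rw [int_odd_iff]; push_cast
        rw [(int_odd_iff a).1 ha, (int_even_iff b).1 hb]; decide
      · exact absurd ⟨ha, hb⟩ hnboth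
    rw [h] at hps
    rcases Int.odd_pow.mp hps with h1 | h1
    · exact h1
    · omega
  -- 3 does not divide s
  have h3s : ¬ (3 : ℤ) ∣ s := by
    intro h3
    obtain ⟨t, rfl⟩ := h3
    have h3a : (3 : ℤ) ∣ a := by
      apply Int.prime_three.dvd_of_dvd_pow (n := 2)
      exact ⟨9 * t ^ 3 - b ^ 2, by linarith⟩
    obtain ⟨a', rfl⟩ := h3a
    have h3b : (3 : ℤ) ∣ b := by
      apply Int.prime_three.dvd_of_dvd_pow (n := 2)
      exact ⟨3 * t ^ 3 - a' ^ 2, by linarith⟩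
    have hd1 : (3 : ℤ) ∣ 3 * a' := ⟨a', rfl⟩
    have := hco.isUnit_of_dvd' hd1 h3b
    rw [Int.isUnit_iff] at this
    omega
  -- the Eisenstein element α = a + b√-3 = ⟨a+b, 2b⟩
  have hnormα : norm (⟨a + b, 2 * b⟩ : Zw) = s ^ 3 := by
    show (a + b) ^ 2 - (a + b) * (2 * b) + (2 * b) ^ 2 = s ^ 3
    rw [← h]; ring
  have hprod : (⟨a + b, 2 * b⟩ : Zw) * conj ⟨a + b, 2 * b⟩ = (s : Zw) ^ 3 := by
    rw [mul_conj, hnormα]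
    push_cast
    ring
  -- coprimality of α and its conjugate
  have hαco : IsCoprime (⟨a + b, 2 * b⟩ : Zw) (conj ⟨a + b, 2 * b⟩) := by
    apply isCoprime_of_irreducible_dvd
    · rintro ⟨h1, -⟩
      have e1 : a + b = 0 := congrArg Zw.re h1
      have e2 : 2 * b = 0 := congrArg Zw.im h1
      have ha : a = 0 := by omega
      have hb : b = 0 := by omega
      rw [ha, hb] at hco
      have := isCoprime_zero_left.mp hco
      simp at this
    · intro z hz hz1 hz2
      have d1 : z ∣ ((2 * a : ℤ) : Zw) := by
        have e1 : (⟨a + b, 2 * b⟩ : Zw) + conj ⟨a + b, 2 * b⟩ = ((2 * a : ℤ) : Zw) := by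
          ext <;> simp only [add_re, add_im, conj_re, conj_im, intCast_re, intCast_im] <;> ring
        exact e1 ▸ dvd_add hz1 hz2
      have d2 : z ∣ ((2 * b : ℤ) : Zw) * ⟨1, 2⟩ := by
        have e2 : (⟨a + b, 2 * b⟩ : Zw) - conj ⟨a + b, 2 * b⟩ = ((2 * b : ℤ) : Zw) * ⟨1, 2⟩ := by
          ext <;>
            simp only [sub_re, sub_im, conj_re, conj_im, intCast_re, intCast_im,
              mul_re, mul_im] <;> ring
        exact e2 ▸ dvd_sub hz1 hz2
      obtain ⟨u, v, huv⟩ := hco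
      have d3 : z ∣ ((2 : ℤ) : Zw) * ⟨1, 2⟩ := by
        have e3 : ((u : ℤ) : Zw) * (((2 * a : ℤ) : Zw) * ⟨1, 2⟩) +
            ((v : ℤ) : Zw) * (((2 * b : ℤ) : Zw) * ⟨1, 2⟩) = ((2 : ℤ) : Zw) * ⟨1, 2⟩ := by
          have hc : ((u * (2 * a) + v * (2 * b) : ℤ) : Zw) = ((2 : ℤ) : Zw) := by
            have : u * (2 * a) + v * (2 * b) = 2 := by linear_combination 2 * huv
            rw [this]
          push_cast at hc ⊢
          linear_combination (⟨1, 2⟩ : Zw) * hc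
        rw [← e3]
        exact dvd_add ((d1.mul_right _).mul_left _) (d2.mul_left _)
      have h12 : norm (((2 : ℤ) : Zw) * ⟨1, 2⟩) = 12 := by
        rw [norm_mul]; rfl
      have hn12 : norm z ∣ 12 := h12 ▸ norm_dvd d3
      have hns : norm z ∣ s ^ 3 := by
        have := norm_dvd hz1; rwa [hnormα] at this
      have hpos := norm_pos hz.ne_zero
      have h2n : ¬ (2 : ℤ) ∣ norm z := by
        intro h2n
        obtain ⟨m, hm⟩ := h2n.trans hns
        have hodd3 : Odd (s ^ 3) := hsodd.pow
        exact (Int.not_odd_iff_even.mpr ⟨m, by linarith⟩) hodd3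
      have h3n : ¬ (3 : ℤ) ∣ norm z :=
        fun h3n => h3s (Int.prime_three.dvd_of_dvd_pow (h3n.trans hns))
      have hne1 : norm z ≠ 1 := fun h1 => hz.not_isUnit (isUnit_of_norm_eq_one h1)
      have hle : norm z ≤ 12 := Int.le_of_dvd (by norm_num) hn12
      set n := norm z with hn
      interval_cases n <;> omega
  -- α is a unit times a cube
  obtain ⟨δ, u, hu⟩ := exists_associated_pow_of_mul_eq_pow' hαco hprod
  obtain ⟨g, t⟩ := δ
  rw [cube_coords] at hu
  dsimp only at hu
  have hun : norm (u : Zw) = 1 := norm_eq_one_of_isUnit u.isUnit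
  have hBeven := even_B g t
  -- norm relation, used in the bad unit cases
  have hnrel : (g ^ 2 - g * t + t ^ 2) ^ 3 = s ^ 3 := by
    have h1 := congrArg Zw.norm hu
    rw [Zw.norm_mul, hun, mul_one] at h1
    rw [hnormα] at h1
    rw [← h1]
    show (g ^ 2 - g * t + t ^ 2) ^ 3 =
      (g ^ 3 + t ^ 3 - 3 * g * t ^ 2) ^ 2 -
        (g ^ 3 + t ^ 3 - 3 * g * t ^ 2) * (3 * g ^ 2 * t - 3 * g * t ^ 2) +
        (3 * g ^ 2 * t - 3 * g * t ^ 2) ^ 2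
    ring
  have hbad : ¬ Even (g ^ 3 + t ^ 3 - 3 * g * t ^ 2) := by
    intro hA
    obtain ⟨⟨k, hk⟩, ⟨l, hl⟩⟩ := even_A hA
    have heven : Even (s ^ 3) := by
      rw [← hnrel, hk, hl, Int.even_pow]
      exact ⟨⟨2 * k ^ 2 - 2 * k * l + 2 * l ^ 2, by ring⟩, by norm_num⟩
    exact (Int.not_odd_iff_even.mpr heven) (hsodd.pow)
  rcases units_cases hun with h6 | h6 | h6 | h6 | h6 | h6 <;> rw [h6] at hu <;>
    have hre := congrArg Zw.re hu <;> have him := congrArg Zw.im hu <;>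
    simp only [mul_re, mul_im] at hre him
  · -- u = 1
    exact final_step (a := a) (b := b) (G0 := g) (H0 := t)
      (by linear_combination -hre) (by linear_combination -him)
  · -- u = -1, use (-g, -t)
    exact final_step (a := a) (b := b) (G0 := -g) (H0 := -t)
      (by linear_combination -hre) (by linear_combination -him)
  · -- u = ω : impossible
    obtain ⟨w, hw⟩ := hBeven
    exact absurd ⟨b + w, by linarith⟩ hbad
  · -- u = -ω : impossible
    obtain ⟨w, hw⟩ := hBeven
    exact absurd ⟨w - b, by linarith⟩ hbad
  · -- u = -ω² : impossible
    exact absurd ⟨b, by linarith⟩ hbad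
  · -- u = ω² : impossible
    exact absurd ⟨-b, by linarith⟩ hbad

end Euler

namespace Euler

lemma odd3 : Odd 3 := ⟨1, by norm_num⟩

lemma cube_inj {x y : ℤ} (h : x ^ 3 = y ^ 3) : x = y :=
  (Odd.strictMono_pow (R := ℤ) odd3).injective h

set_option maxHeartbeats 2000000 in
/-- Euler's descent: `x³ + y³ = 2 z³` implies `x = ± y`. -/
lemma two_cubes_aux (n : ℕ) : ∀ x y z : ℤ, z.natAbs ≤ n → x ^ 3 + y ^ 3 = 2 * z ^ 3 →
    x = y ∨ x = -y := by
  induction n using Nat.strong_induction_on with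
  | _ n ih =>
  intro x y z hn heq
  -- trivial case z = 0
  rcases eq_or_ne z 0 with rfl | hz0
  · right
    apply cube_inj
    rw [show (-y) ^ 3 = -y ^ 3 by ring]
    linarith [heq]
  -- parity analysis
  have key2 : ∀ u v w : ZMod 2, u ^ 3 + v ^ 3 = 2 * w ^ 3 →
      (u = 0 ∧ v = 0) ∨ (u = 1 ∧ v = 1) := by decide
  have hc := congrArg (fun w : ℤ => (w : ZMod 2)) heq
  push_cast at hc
  rcases key2 _ _ _ hc with ⟨hex, hey⟩ | ⟨hox, hoy⟩
  · -- both even : divide by 2 and recurse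
    obtain ⟨k, hk⟩ := (int_even_iff x).2 hex
    obtain ⟨l, hl⟩ := (int_even_iff y).2 hey
    have hz3 : 2 * z ^ 3 = 2 * (4 * (k ^ 3 + l ^ 3)) := by
      rw [hk, hl] at heq; linear_combination -heq
    have hz3' : z ^ 3 = 4 * (k ^ 3 + l ^ 3) := by linarith
    have hze : Even z := by
      have : Even (z ^ 3) := ⟨2 * (k ^ 3 + l ^ 3), by linarith⟩
      exact (Int.even_pow.mp this).1
    obtain ⟨m, hm⟩ := hze
    have hm0 : m ≠ 0 := by rintro rfl; omega
    have heq' : k ^ 3 + l ^ 3 = 2 * m ^ 3 := by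
      have h8 : 8 * (k ^ 3 + l ^ 3) = 8 * (2 * m ^ 3) := by
        rw [hm] at hz3'; linear_combination -2 * hz3'
      linarith
    have hlt : m.natAbs < n := by
      have h1 : z.natAbs = 2 * m.natAbs := by omega
      omega
    rcases ih m.natAbs hlt k l m le_rfl heq' with h | h
    · left; omega
    · right; omega
  · -- both odd : main case
    have hxodd : Odd x := (int_odd_iff x).2 hox
    have hyodd : Odd y := (int_odd_iff y).2 hoy
    have hx0 : x ≠ 0 := by rintro rfl; rcases hxodd with ⟨c, hc'⟩; omega
    -- reduce to the coprime case
    set g : ℤ := (Int.gcd x y : ℤ) with hgdef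
    have hgpos : 0 < Int.gcd x y := Int.gcd_pos_iff.mpr (Or.inl hx0)
    have hg0 : g ≠ 0 := by simp [hgdef]; omega
    have hgx : g ∣ x := Int.gcd_dvd_left x y
    have hgy : g ∣ y := Int.gcd_dvd_right x y
    have hX : g * (x / g) = x := Int.mul_ediv_cancel' hgx
    have hY : g * (y / g) = y := Int.mul_ediv_cancel' hgy
    set X := x / g with hXdef
    set Y := y / g with hYdef
    have hXYco : IsCoprime X Y :=
      Int.isCoprime_iff_gcd_eq_one.mpr (Int.gcd_div_gcd_div_gcd hgpos)
    have hgodd : Odd g := by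
      rcases Int.even_or_odd g with ⟨r, hr⟩ | h
      · exfalso
        have : Even x := ⟨r * X, by rw [← hX, hr]; ring⟩
        exact (Int.not_odd_iff_even.mpr this) hxodd
      · exact h
    have hXodd : Odd X := by
      have : Odd (g * X) := by rw [hX]; exact hxodd
      exact (Int.odd_mul.mp this).2
    have hYodd : Odd Y := by
      have : Odd (g * Y) := by rw [hY]; exact hyodd
      exact (Int.odd_mul.mp this).2
    -- g divides z
    have hd3 : g ^ 3 ∣ 2 * z ^ 3 := ⟨X ^ 3 + Y ^ 3, by rw [← heq, ← hX, ← hY]; ring⟩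
    obtain ⟨k, hk⟩ := hd3
    have hkeven : Even k := by
      rcases Int.even_or_odd k with h | hko
      · exact h
      · exfalso
        have hg3odd : Odd (g ^ 3) := hgodd.pow
        have : Odd (2 * z ^ 3) := by rw [hk]; exact hg3odd.mul hko
        rcases this with ⟨c, hc'⟩; omega
    obtain ⟨m, hm⟩ := hkeven
    have hgz : g ∣ z := by
      have hcube : g ^ 3 ∣ z ^ 3 := ⟨m, by
        have h2 : 2 * z ^ 3 = 2 * (g ^ 3 * m) := by rw [hm] at hk; linear_combination hk
        linarith⟩
      exact (Int.pow_dvd_pow_iff (by norm_num : (3:ℕ) ≠ 0)).mp hcube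
    obtain ⟨Z, hZ⟩ : ∃ Z, g * Z = z := ⟨z / g, Int.mul_ediv_cancel' hgz⟩
    have heq2 : X ^ 3 + Y ^ 3 = 2 * Z ^ 3 := by
      have hgg : g ^ 3 * (X ^ 3 + Y ^ 3) = g ^ 3 * (2 * Z ^ 3) := by
        rw [← hX, ← hY, ← hZ] at heq; linear_combination heq
      exact mul_left_cancel₀ (pow_ne_zero 3 hg0) hgg
    have hZ0 : Z ≠ 0 := by rintro rfl; rw [mul_zero] at hZ; exact hz0 hZ.symm
    have hZn : Z.natAbs ≤ n := by
      have : Z ∣ z := ⟨g, by rw [← hZ]; ring⟩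
      have := Int.natAbs_dvd_natAbs.mpr this
      have := Nat.le_of_dvd (by omega) this
      omega
    rcases eq_or_ne X Y with hXY | hXneY
    · left; rw [← hX, ← hY, hXY]
    rcases eq_or_ne X (-Y) with hXY | hXnenY
    · right; rw [← hX, ← hY, hXY]; ring
    exfalso
    -- write X = p + q, Y = p - q
    obtain ⟨p, hpdef⟩ : Even (X + Y) := hXodd.add_odd hYodd
    obtain ⟨q, hqdef⟩ : Even (X - Y) := hXodd.sub_odd hYodd
    have hXpq : X = p + q := by omega
    have hYpq : Y = p - q := by omega
    have hq0 : q ≠ 0 := by rintro rfl; exact hXneY (by omega)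
    have hp0 : p ≠ 0 := by rintro rfl; exact hXnenY (by omega)
    have hpq : IsCoprime p q := by
      obtain ⟨u, v, huv⟩ := hXYco
      exact ⟨u + v, u - v, by linear_combination huv - u * hXpq - v * hYpq⟩
    have hZp : Z ^ 3 = p * (p ^ 2 + 3 * q ^ 2) := by
      rw [hXpq, hYpq] at heq2
      have h2' : 2 * Z ^ 3 = 2 * (p * (p ^ 2 + 3 * q ^ 2)) := by linear_combination -heq2
      linarith
    have hpqodd : Odd (p + q) := hXpq ▸ hXodd
    by_cases h3p : (3 : ℤ) ∣ p
    · -- case 3 ∣ p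
      obtain ⟨P, hP⟩ := h3p
      have h3q : ¬ (3 : ℤ) ∣ q := by
        intro h3q
        have := hpq.isUnit_of_dvd' ⟨P, hP⟩ h3q
        rw [Int.isUnit_iff] at this; omega
      have h3Z : (3 : ℤ) ∣ Z := by
        apply Int.prime_three.dvd_of_dvd_pow (n := 3)
        exact ⟨P * (p ^ 2 + 3 * q ^ 2), by rw [hZp, hP]; ring⟩
      obtain ⟨W0, hW0⟩ := h3Z
      have hW0cube : 3 * W0 ^ 3 = P * (3 * P ^ 2 + q ^ 2) := by
        have h27 : 27 * W0 ^ 3 = 9 * P * (3 * P ^ 2 + q ^ 2) := by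
          rw [hW0, hP] at hZp; linear_combination hZp
        linarith
      have h3P : (3 : ℤ) ∣ P := by
        have hd : (3:ℤ) ∣ P * (3 * P ^ 2 + q ^ 2) := ⟨W0 ^ 3, by linarith⟩
        rcases (Int.prime_three.dvd_mul).mp hd with h | h
        · exact h
        · exfalso
          have : (3:ℤ) ∣ q ^ 2 := ⟨(3 * P ^ 2 + q ^ 2) / 3 - P ^ 2, by
            obtain ⟨c, hc'⟩ := h
            rw [show (3 * P ^ 2 + q ^ 2) / 3 = c by rw [hc']; omega]
            linarith⟩
          exact h3q (Int.prime_three.dvd_of_dvd_pow this)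
      obtain ⟨T, hT⟩ := h3P
      have hWT : T * (q ^ 2 + 27 * T ^ 2) = W0 ^ 3 := by
        have h9 : 3 * (T * (q ^ 2 + 27 * T ^ 2)) = 3 * W0 ^ 3 := by
          rw [hT] at hW0cube; linear_combination -hW0cube
        linarith
      have hTq : IsCoprime T q := hpq.of_isCoprime_of_dvd_left ⟨9, by rw [hP, hT]; ring⟩
      have hcoT : IsCoprime T (q ^ 2 + 27 * T ^ 2) := by
        have h1 := (hTq.pow_right (n := 2)).add_mul_left_right (27 * T)
        rwa [show q ^ 2 + T * (27 * T) = q ^ 2 + 27 * T ^ 2 by ring] at h1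
      obtain ⟨U, hU⟩ := Int.eq_pow_of_mul_eq_pow_odd_left hcoT odd3 hWT
      obtain ⟨s, hs3⟩ := Int.eq_pow_of_mul_eq_pow_odd_right hcoT odd3 hWT
      have hq3T : IsCoprime q (3 * T) :=
        ((Int.prime_three.coprime_iff_not_dvd.mpr h3q).symm).mul_right hTq.symm
      obtain ⟨e, f, hqe, hTe⟩ := cube_rep (s := s) hq3T (by linear_combination hs3)
      have hT' : T = e ^ 2 * f - f ^ 3 := by linarith
      have hef : IsCoprime e f := by
        obtain ⟨u, v, huv⟩ := hq3T
        exact ⟨u * (e ^ 2 - 9 * f ^ 2), v * (3 * e ^ 2 - 3 * f ^ 2),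
          by linear_combination huv - u * hqe - v * hTe⟩
      have hnboth : ¬ (Odd e ∧ Odd f) := by
        rintro ⟨hoe, hof⟩
        have h2q : (2:ℤ) ∣ q := by
          have hcast : (q : ZMod 2) = 0 := by
            have := congrArg (fun w : ℤ => (w : ZMod 2)) hqe
            push_cast at this
            rw [(int_odd_iff e).1 hoe, (int_odd_iff f).1 hof] at this
            rw [this]; decide
          exact_mod_cast (ZMod.intCast_zmod_eq_zero_iff_dvd q 2).mp hcast
        have h2p : (2:ℤ) ∣ p := by
          have h2T : (2:ℤ) ∣ T := by
            have hcast : (T : ZMod 2) = 0 := by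
              have := congrArg (fun w : ℤ => (w : ZMod 2)) hT'
              push_cast at this
              rw [(int_odd_iff e).1 hoe, (int_odd_iff f).1 hof] at this
              rw [this]; decide
            exact_mod_cast (ZMod.intCast_zmod_eq_zero_iff_dvd T 2).mp hcast
          obtain ⟨c, hc'⟩ := h2T
          exact ⟨9 * c, by rw [hP, hT, hc']; ring⟩
        have := hpq.isUnit_of_dvd' h2p h2q
        rw [Int.isUnit_iff] at this; omega
      have hefodd : Odd (e - f) ∧ Odd (e + f) := by
        rcases Int.even_or_odd e with ⟨ke, hke⟩ | hoe
        · rcases Int.even_or_odd f with ⟨kf, hkf⟩ | hof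
          · exfalso
            have hd1 : (2:ℤ) ∣ e := ⟨ke, by omega⟩
            have hd2 : (2:ℤ) ∣ f := ⟨kf, by omega⟩
            have := hef.isUnit_of_dvd' hd1 hd2
            rw [Int.isUnit_iff] at this; omega
          · obtain ⟨kf, hkf⟩ := hof
            exact ⟨⟨ke - kf - 1, by omega⟩, ⟨ke + kf, by omega⟩⟩
        · rcases Int.even_or_odd f with ⟨kf, hkf⟩ | hof
          · obtain ⟨ke, hke⟩ := hoe
            exact ⟨⟨ke - kf, by omega⟩, ⟨ke + kf, by omega⟩⟩
          · exact absurd ⟨hoe, hof⟩ hnboth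
      have hTfact : f * ((e - f) * (e + f)) = U ^ 3 := by
        rw [← hU]; linear_combination -hT'
      have cf1 : IsCoprime f (e - f) := by
        have h1 := hef.symm.add_mul_left_right (-1)
        rwa [show e + f * (-1) = e - f by ring] at h1
      have cf2 : IsCoprime f (e + f) := by
        have h1 := hef.symm.add_mul_left_right 1
        rwa [show e + f * 1 = e + f by ring] at h1
      have c12 : IsCoprime (e - f) (e + f) := by
        have hodd1 : Odd (e - f) := hefodd.1
        have hco2 : IsCoprime (e - f) 2 := by
          rcases hodd1 with ⟨c, hc'⟩
          exact ⟨1, -c, by linarith⟩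
        have hcof : IsCoprime (e - f) f := cf1.symm
        have h1 := (hco2.mul_right hcof).add_mul_left_right 1
        rwa [show 2 * f + (e - f) * 1 = e + f by ring] at h1
      obtain ⟨A, hA⟩ := Int.eq_pow_of_mul_eq_pow_odd_left (cf1.mul_right cf2) odd3 hTfact
      obtain ⟨M, hM⟩ := Int.eq_pow_of_mul_eq_pow_odd_right (cf1.mul_right cf2) odd3 hTfact
      obtain ⟨B, hB⟩ := Int.eq_pow_of_mul_eq_pow_odd_left c12 odd3 hM
      obtain ⟨C, hC⟩ := Int.eq_pow_of_mul_eq_pow_odd_right c12 odd3 hM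
      have hnew : C ^ 3 + (-B) ^ 3 = 2 * A ^ 3 := by
        rw [show (-B)^3 = -B^3 by ring, ← hA, ← hB, ← hC]; ring
      have hf0 : f ≠ 0 := by
        rintro rfl
        exact hp0 (by rw [hP, hT, hT']; ring)
      have hA0 : A ≠ 0 := by rintro rfl; exact hf0 (by rw [hA]; norm_num)
      have hB0 : B ≠ 0 := by
        rintro rfl
        have hef' : e = f := by
          have h0 : e - f = 0 := by rw [hB]; norm_num
          omega
        have hd1 : f ∣ e := by rw [hef']
        have := hef.isUnit_of_dvd' hd1 dvd_rfl
        rw [Int.isUnit_iff] at this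
        apply hnboth
        rcases this with h | h
        · exact ⟨by rw [hef', h]; exact ⟨0, by norm_num⟩, by rw [h]; exact ⟨0, by norm_num⟩⟩
        · exact ⟨by rw [hef', h]; exact ⟨-1, by norm_num⟩, by rw [h]; exact ⟨-1, by norm_num⟩⟩
      have hC0 : C ≠ 0 := by
        rintro rfl
        have hef' : e = -f := by
          have h0 : e + f = 0 := by rw [hC]; norm_num
          omega
        have hd1 : f ∣ e := by rw [hef']; exact dvd_neg.mpr dvd_rfl
        have := hef.isUnit_of_dvd' hd1 dvd_rfl
        rw [Int.isUnit_iff] at this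
        apply hnboth
        rcases this with h | h
        · exact ⟨by rw [hef', h]; exact ⟨-1, by norm_num⟩, by rw [h]; exact ⟨0, by norm_num⟩⟩
        · exact ⟨by rw [hef', h]; exact ⟨0, by norm_num⟩, by rw [h]; exact ⟨-1, by norm_num⟩⟩
      have hs0 : s ≠ 0 := by
        rintro rfl
        have h0 : q ^ 2 + 27 * T ^ 2 = 0 := by rw [hs3]; norm_num
        have h1 : q ^ 2 ≠ 0 := pow_ne_zero 2 hq0
        nlinarith [sq_nonneg q, sq_nonneg T, lt_of_le_of_ne (sq_nonneg q) (Ne.symm h1)]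
      have hW0fact : W0 = A * B * C * s := by
        apply cube_inj
        rw [show (A * B * C * s) ^ 3 = A ^ 3 * (B ^ 3 * C ^ 3) * s ^ 3 by ring,
          ← hA, ← hB, ← hC, ← hs3, ← hWT]
        linear_combination (q ^ 2 + 27 * T ^ 2) * hT'
      have hZnat : Z.natAbs = 3 * (A.natAbs * B.natAbs * C.natAbs * s.natAbs) := by
        rw [hW0, hW0fact]
        simp only [Int.natAbs_mul]
        norm_num
      have hAlt : A.natAbs < n := by
        have h1A : 1 ≤ A.natAbs := by omega
        have h1B : 1 ≤ B.natAbs := by omega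
        have h1C : 1 ≤ C.natAbs := by omega
        have h1s : 1 ≤ s.natAbs := by omega
        have hbcs : 1 ≤ B.natAbs * C.natAbs * s.natAbs := by
          calc 1 = 1 * 1 * 1 := rfl
            _ ≤ B.natAbs * C.natAbs * s.natAbs :=
              Nat.mul_le_mul (Nat.mul_le_mul h1B h1C) h1s
        have e1 : A.natAbs * 1 ≤ A.natAbs * (B.natAbs * C.natAbs * s.natAbs) :=
          Nat.mul_le_mul_left _ hbcs
        have e2 : A.natAbs * (B.natAbs * C.natAbs * s.natAbs) =
            A.natAbs * B.natAbs * C.natAbs * s.natAbs := by ring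
        omega
      rcases ih A.natAbs hAlt C (-B) A le_rfl hnew with hres | hres
      · -- C = -B : then e = 0, so q = 0, contradiction
        have hcube : C ^ 3 = -(B ^ 3) := by rw [hres]; ring
        rw [← hB, ← hC] at hcube
        have he0 : e = 0 := by omega
        exact hq0 (by rw [hqe, he0]; ring)
      · -- C = B : then f = 0, contradiction
        have hcube : C ^ 3 = B ^ 3 := by rw [hres]; ring
        rw [← hB, ← hC] at hcube
        have hf0' : f = 0 := by omega
        exact hf0 hf0'
    · -- case ¬ 3 ∣ p
      have hco1 : IsCoprime p (p ^ 2 + 3 * q ^ 2) := by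
        have c3 : IsCoprime p 3 := (Int.prime_three.coprime_iff_not_dvd.mpr h3p).symm
        have c3q : IsCoprime p (3 * q ^ 2) := c3.mul_right (hpq.pow_right)
        have h1 := c3q.add_mul_left_right p
        rwa [show 3 * q ^ 2 + p * p = p ^ 2 + 3 * q ^ 2 by ring] at h1
      have hmul : p * (p ^ 2 + 3 * q ^ 2) = Z ^ 3 := hZp.symm
      obtain ⟨r, hr⟩ := Int.eq_pow_of_mul_eq_pow_odd_left hco1 odd3 hmul
      obtain ⟨s, hs3⟩ := Int.eq_pow_of_mul_eq_pow_odd_right hco1 odd3 hmul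
      obtain ⟨e, f, hpe, hqe⟩ := cube_rep (s := s) hpq hs3
      have hef : IsCoprime e f := by
        obtain ⟨u, v, huv⟩ := hpq
        exact ⟨u * (e ^ 2 - 9 * f ^ 2), v * (3 * e ^ 2 - 3 * f ^ 2),
          by linear_combination huv - u * hpe - v * hqe⟩
      have h3e : ¬ (3:ℤ) ∣ e := by
        rintro ⟨c, hc⟩
        exact h3p ⟨c * (e ^ 2 - 9 * f ^ 2), by rw [hpe, hc]; ring⟩
      have hnboth : ¬ (Odd e ∧ Odd f) := by
        rintro ⟨hoe, hof⟩
        have h2p : (2:ℤ) ∣ p := by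
          have hcast : (p : ZMod 2) = 0 := by
            have := congrArg (fun w : ℤ => (w : ZMod 2)) hpe
            push_cast at this
            rw [(int_odd_iff e).1 hoe, (int_odd_iff f).1 hof] at this
            rw [this]; decide
          exact_mod_cast (ZMod.intCast_zmod_eq_zero_iff_dvd p 2).mp hcast
        have h2q : (2:ℤ) ∣ q := by
          have hcast : (q : ZMod 2) = 0 := by
            have := congrArg (fun w : ℤ => (w : ZMod 2)) hqe
            push_cast at this
            rw [(int_odd_iff e).1 hoe, (int_odd_iff f).1 hof] at this
            rw [this]; decide
          exact_mod_cast (ZMod.intCast_zmod_eq_zero_iff_dvd q 2).mp hcast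
        have := hpq.isUnit_of_dvd' h2p h2q
        rw [Int.isUnit_iff] at this; omega
      have hefodd : Odd (e - 3 * f) ∧ Odd (e + 3 * f) := by
        rcases Int.even_or_odd e with ⟨ke, hke⟩ | hoe
        · rcases Int.even_or_odd f with ⟨kf, hkf⟩ | hof
          · exfalso
            have hd1 : (2:ℤ) ∣ e := ⟨ke, by omega⟩
            have hd2 : (2:ℤ) ∣ f := ⟨kf, by omega⟩
            have := hef.isUnit_of_dvd' hd1 hd2
            rw [Int.isUnit_iff] at this; omega
          · obtain ⟨kf, hkf⟩ := hof
            exact ⟨⟨ke - 3 * kf - 2, by omega⟩, ⟨ke + 3 * kf + 1, by omega⟩⟩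
        · rcases Int.even_or_odd f with ⟨kf, hkf⟩ | hof
          · obtain ⟨ke, hke⟩ := hoe
            exact ⟨⟨ke - 3 * kf, by omega⟩, ⟨ke + 3 * kf, by omega⟩⟩
          · exact absurd ⟨hoe, hof⟩ hnboth
      have h3mf : ¬ (3:ℤ) ∣ (e - 3 * f) := by
        intro hd
        exact h3e (by omega)
      have ce3f : IsCoprime e (3 * f) :=
        ((Int.prime_three.coprime_iff_not_dvd.mpr h3e).symm).mul_right hef
      have c1 : IsCoprime e (e - 3 * f) := by
        have h1 := ce3f.neg_right.add_mul_left_right 1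
        rwa [show -(3 * f) + e * 1 = e - 3 * f by ring] at h1
      have c2 : IsCoprime e (e + 3 * f) := by
        have h1 := ce3f.add_mul_left_right 1
        rwa [show 3 * f + e * 1 = e + 3 * f by ring] at h1
      have c12 : IsCoprime (e - 3 * f) (e + 3 * f) := by
        have co2 : IsCoprime (e - 3 * f) 2 := by
          rcases hefodd.1 with ⟨c, hc⟩
          exact ⟨1, -c, by linarith⟩
        have co3 : IsCoprime (e - 3 * f) 3 :=
          (Int.prime_three.coprime_iff_not_dvd.mpr h3mf).symm
        have cof : IsCoprime (e - 3 * f) f := by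
          have h1 := hef.symm.add_mul_left_right (-3)
          exact (by rwa [show e + f * (-3) = e - 3 * f by ring] at h1 :
            IsCoprime f (e - 3 * f)).symm
        have h6f : IsCoprime (e - 3 * f) (2 * (3 * f)) :=
          co2.mul_right (co3.mul_right cof)
        have h1 := h6f.add_mul_left_right 1
        rwa [show 2 * (3 * f) + (e - 3 * f) * 1 = e + 3 * f by ring] at h1
      have hpfact : e * ((e - 3 * f) * (e + 3 * f)) = r ^ 3 := by
        rw [← hr]; linear_combination -hpe
      obtain ⟨U, hU⟩ := Int.eq_pow_of_mul_eq_pow_odd_left (c1.mul_right c2) odd3 hpfact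
      obtain ⟨M, hM⟩ := Int.eq_pow_of_mul_eq_pow_odd_right (c1.mul_right c2) odd3 hpfact
      obtain ⟨V, hV⟩ := Int.eq_pow_of_mul_eq_pow_odd_left c12 odd3 hM
      obtain ⟨W, hW⟩ := Int.eq_pow_of_mul_eq_pow_odd_right c12 odd3 hM
      have hnew : V ^ 3 + W ^ 3 = 2 * U ^ 3 := by
        rw [← hU, ← hV, ← hW]; ring
      have hU0 : U ≠ 0 := by
        rintro rfl
        have he0 : e = 0 := by rw [hU]; norm_num
        exact hp0 (by rw [hpe, he0]; ring)
      have hV0 : V ≠ 0 := by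
        rintro rfl
        have h0 : e - 3 * f = 0 := by rw [hV]; norm_num
        exact h3e ⟨f, by omega⟩
      have hW0' : W ≠ 0 := by
        rintro rfl
        have h0 : e + 3 * f = 0 := by rw [hW]; norm_num
        exact h3e ⟨-f, by omega⟩
      have hs0 : s ≠ 0 := by
        rintro rfl
        have h0 : p ^ 2 + 3 * q ^ 2 = 0 := by rw [hs3]; norm_num
        have h1 : q ^ 2 ≠ 0 := pow_ne_zero 2 hq0
        nlinarith [sq_nonneg p, sq_nonneg q, lt_of_le_of_ne (sq_nonneg q) (Ne.symm h1)]
      have hZfact : Z = U * V * W * s := by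
        apply cube_inj
        rw [show (U * V * W * s) ^ 3 = U ^ 3 * (V ^ 3 * W ^ 3) * s ^ 3 by ring,
          ← hU, ← hV, ← hW, ← hs3, hZp]
        linear_combination (p ^ 2 + 3 * q ^ 2) * hpe
      have hVW : ¬ (V.natAbs = 1 ∧ W.natAbs = 1) := by
        rintro ⟨h1, h2⟩
        have hV' : V = 1 ∨ V = -1 := by omega
        have hW' : W = 1 ∨ W = -1 := by omega
        rcases hV' with hv | hv <;> rcases hW' with hw | hw <;>
          rw [hv] at hV <;> rw [hw] at hW <;> norm_num at hV hW
        · exact hq0 (by rw [hqe, show f = 0 by omega]; ring)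
        · exact hp0 (by rw [hpe, show e = 0 by omega]; ring)
        · exact hp0 (by rw [hpe, show e = 0 by omega]; ring)
        · exact hq0 (by rw [hqe, show f = 0 by omega]; ring)
      have hZnat : Z.natAbs = U.natAbs * V.natAbs * W.natAbs * s.natAbs := by
        rw [hZfact]; simp only [Int.natAbs_mul]
      have hUlt : U.natAbs < n := by
        have h1U : 1 ≤ U.natAbs := by omega
        have h1V : 1 ≤ V.natAbs := by omega
        have h1W : 1 ≤ W.natAbs := by omega
        have h1s : 1 ≤ s.natAbs := by omega
        have h2vw : 2 ≤ V.natAbs * W.natAbs := by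
          rcases Nat.lt_or_ge V.natAbs 2 with hv | hv
          · have hv1 : V.natAbs = 1 := by omega
            have hw2 : 2 ≤ W.natAbs := by
              rcases Nat.lt_or_ge W.natAbs 2 with hw | hw
              · exact absurd ⟨hv1, by omega⟩ hVW
              · exact hw
            calc 2 ≤ W.natAbs := hw2
              _ = V.natAbs * W.natAbs := by rw [hv1, one_mul]
          · calc 2 = 2 * 1 := rfl
              _ ≤ V.natAbs * W.natAbs := Nat.mul_le_mul hv h1W
        have e1 : U.natAbs * 2 ≤ U.natAbs * (V.natAbs * W.natAbs) :=
          Nat.mul_le_mul_left _ h2vw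
        have e2 : U.natAbs * (V.natAbs * W.natAbs) * 1 ≤
            U.natAbs * (V.natAbs * W.natAbs) * s.natAbs :=
          Nat.mul_le_mul_left _ h1s
        have e3 : U.natAbs * (V.natAbs * W.natAbs) * s.natAbs =
            U.natAbs * V.natAbs * W.natAbs * s.natAbs := by ring
        omega
      rcases ih U.natAbs hUlt V W U le_rfl hnew with hres | hres
      · -- V = W : f = 0
        have hcube : V ^ 3 = W ^ 3 := by rw [hres]
        rw [← hV, ← hW] at hcube
        exact hq0 (by rw [hqe, show f = 0 by omega]; ring)
      · -- V = -W : e = 0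
        have hcube : V ^ 3 = -(W ^ 3) := by rw [hres]; ring
        rw [← hV, ← hW] at hcube
        exact hp0 (by rw [hpe, show e = 0 by omega]; ring)

/-- All integer solutions of `x³ + y³ = 2 z³` satisfy `x = ± y`. -/
lemma two_cubes {x y z : ℤ} (h : x ^ 3 + y ^ 3 = 2 * z ^ 3) : x = y ∨ x = -y :=
  two_cubes_aux z.natAbs x y z le_rfl h

end Euler

open Euler in
/-- Euler's theorem: all integer solutions of `x ^ 2 - y ^ 3 = 1`. -/
theorem euler_x_sq_sub_y_cube (x y : ℤ) (h : x ^ 2 - y ^ 3 = 1) :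
    (x = 0 ∧ y = -1) ∨ (x = 1 ∧ y = 0) ∨ (x = -1 ∧ y = 0) ∨
      (x = 3 ∧ y = 2) ∨ (x = -3 ∧ y = 2) := by
  have hmul : (x - 1) * (x + 1) = y ^ 3 := by linear_combination h
  rcases Int.even_or_odd x with ⟨m, hx⟩ | ⟨u, hu⟩
  · -- x even
    have hco : IsCoprime (x - 1) (x + 1) := ⟨m, 1 - m, by linear_combination hx⟩
    obtain ⟨A, hA⟩ := Int.eq_pow_of_mul_eq_pow_odd_left hco odd3 hmul
    obtain ⟨B, hB⟩ := Int.eq_pow_of_mul_eq_pow_odd_right hco odd3 hmul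
    have hBA : B ^ 3 = A ^ 3 + 2 := by linear_combination hA - hB
    have hAB : A < B := by
      by_contra hc
      push_neg at hc
      have hmono := (Odd.strictMono_pow (R := ℤ) odd3).monotone hc
      nlinarith
    have hABle : A + 1 ≤ B := by omega
    have hmono := (Odd.strictMono_pow (R := ℤ) odd3).monotone hABle
    have hA1 : -1 ≤ A := by nlinarith
    have hA2 : A ≤ 0 := by nlinarith
    interval_cases A
    · -- A = -1, B = 1, x = 0, y = -1
      have hB1 : B = 1 := by
        apply cube_inj; rw [hBA]; norm_num
      have hx0 : x = 0 := by rw [hB1] at hB; norm_num at hB; omega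
      have hy : y = -1 := by
        apply cube_inj
        rw [show (-1 : ℤ) ^ 3 = -1 by norm_num, ← hmul, hx0]; ring
      exact Or.inl ⟨hx0, hy⟩
    · -- A = 0 : B³ = 2 impossible
      exfalso
      norm_num at hBA
      have h1 : 1 ≤ B := by omega
      rcases eq_or_lt_of_le h1 with h2 | h2
      · rw [← h2] at hBA; norm_num at hBA
      · have h2' : 2 ≤ B := by omega
        nlinarith [mul_nonneg (mul_nonneg (sub_nonneg.mpr h2') (sub_nonneg.mpr h2'))
          (sub_nonneg.mpr h2'), sq_nonneg (B - 2), hBA]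
  · -- x odd
    have hyeven : Even y := by
      have h3 : Even (y ^ 3) := ⟨2 * u ^ 2 + 2 * u, by rw [← hmul, hu]; ring⟩
      exact (Int.even_pow.mp h3).1
    obtain ⟨w, hw⟩ := hyeven
    have h2w : 2 * w ^ 3 = u * (u + 1) := by
      have h8 : 8 * w ^ 3 = 4 * (u * (u + 1)) := by
        rw [hu, hw] at h; linear_combination -h
      linarith
    have hcu : IsCoprime u (u + 1) := ⟨-1, 1, by ring⟩
    rcases Int.even_or_odd u with ⟨a', ha'⟩ | ⟨c', hc'⟩
    · -- u even : u = 2a', a'(u+1) = w³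
      have hsplit : a' * (u + 1) = w ^ 3 := by
        have h2 : 2 * (a' * (u + 1)) = 2 * w ^ 3 := by
          rw [ha'] at h2w; linear_combination -h2w + 2 * a' * ha'
        linarith
      have hco' : IsCoprime a' (u + 1) :=
        hcu.of_isCoprime_of_dvd_left ⟨2, by omega⟩
      obtain ⟨a, ha⟩ := Int.eq_pow_of_mul_eq_pow_odd_left hco' odd3 hsplit
      obtain ⟨b, hb⟩ := Int.eq_pow_of_mul_eq_pow_odd_right hco' odd3 hsplit
      have hkey : b ^ 3 + (-1) ^ 3 = 2 * a ^ 3 := by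
        rw [show ((-1 : ℤ)) ^ 3 = -1 by norm_num, ← ha, ← hb]; omega
      rcases two_cubes hkey with hres | hres
      · -- b = -1 : u = -2, x = -3, y = 2
        have hu2 : u = -2 := by rw [hres] at hb; norm_num at hb; omega
        have hx3 : x = -3 := by omega
        have hy2 : y = 2 := by
          apply cube_inj
          rw [show (2 : ℤ) ^ 3 = 8 by norm_num, ← hmul, hx3]; ring
        exact Or.inr (Or.inr (Or.inr (Or.inr ⟨hx3, hy2⟩)))
      · -- b = 1 : u = 0, x = 1, y = 0
        have hu0 : u = 0 := by rw [hres] at hb; norm_num at hb; omega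
        have hx1 : x = 1 := by omega
        have hy0 : y = 0 := by
          apply cube_inj
          rw [show (0 : ℤ) ^ 3 = 0 by norm_num, ← hmul, hx1]; ring
        exact Or.inr (Or.inl ⟨hx1, hy0⟩)
    · -- u odd : u + 1 = 2c, u·c = w³
      obtain ⟨c, hc⟩ : ∃ c, u + 1 = 2 * c := ⟨c' + 1, by omega⟩
      have hsplit : u * c = w ^ 3 := by
        have h2 : 2 * (u * c) = 2 * w ^ 3 := by
          rw [hc] at h2w; linear_combination -h2w
        linarith
      have hco' : IsCoprime u c :=
        hcu.of_isCoprime_of_dvd_right ⟨2, by omega⟩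
      obtain ⟨b, hb⟩ := Int.eq_pow_of_mul_eq_pow_odd_left hco' odd3 hsplit
      obtain ⟨a, ha⟩ := Int.eq_pow_of_mul_eq_pow_odd_right hco' odd3 hsplit
      have hkey : b ^ 3 + 1 ^ 3 = 2 * a ^ 3 := by
        rw [show ((1 : ℤ)) ^ 3 = 1 by norm_num, ← ha, ← hb]; omega
      rcases two_cubes hkey with hres | hres
      · -- b = 1 : u = 1, x = 3, y = 2
        have hu1 : u = 1 := by rw [hres] at hb; norm_num at hb; omega
        have hx3 : x = 3 := by omega
        have hy2 : y = 2 := by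
          apply cube_inj
          rw [show (2 : ℤ) ^ 3 = 8 by norm_num, ← hmul, hx3]; ring
        exact Or.inr (Or.inr (Or.inr (Or.inl ⟨hx3, hy2⟩)))
      · -- b = -1 : u = -1, x = -1, y = 0
        have hu1 : u = -1 := by rw [hres] at hb; norm_num at hb; omega
        have hx1 : x = -1 := by omega
        have hy0 : y = 0 := by
          apply cube_inj
          rw [show (0 : ℤ) ^ 3 = 0 by norm_num, ← hmul, hx1]; ring
        exact Or.inr (Or.inr (Or.inl ⟨hx1, hy0⟩))
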